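/- arXiv:2411.06367 — 2 statements merged into one kernel-verified Lean document; each statement's English description precedes it below -/
import Mathlib

section
/- For every integer j ≥ 2 and every real a ≥ 0, (j+1)·(Φ(a√(j+1)) − Φ(a√j)) ≤ (3/√(2π)) ∫ from √(2·ln(3/2)) to √(3·ln(3/2)) of e^{−t²/2} dt, and this right-hand side is at most 0.147. -/
/-!
Write `G_j(a) = ∫_{a√j}^{a√(j+1)} e^{-t²/2} dt`, so that the left-hand side is
`(j+1) G_j(a) / √(2π)`. The derivative of `G_j` is
`√j (e^{(log((j+1)/j) - (j+1)a²)/2} - e^{-ja²/2})`, which changes sign once, at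
`a² = log((j+1)/j)`. For `j = 2` this maximum is exactly the right-hand side, and for `j = 3`
it is below `0.09`. For `j ≥ 4` the cruder bound `G_j(a) ≤ a(√(j+1) - √j) e^{-ja²/2}` and
`y e^{-y²/2} ≤ e^{-1/2}` give `(j+1) G_j(a) ≤ 0.36`, while `3 G_2` at its maximum exceeds
`0.36`.

The numerical values come from writing `-t²/2 = m²/2 - mt - (t-m)²/2` at the midpoint `m` of
the interval of integration `[c, b]`: the last term lies in `[-(b-c)²/8, 0]`, and `e^{m²/2 - mt}`
integrates in closed form.
-/

open MeasureTheory ProbabilityTheory Real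

/-- The standard normal cumulative distribution function
`Φ(x) = (1/√(2π)) ∫_{-∞}^{x} e^{-t²/2} dt`. -/
noncomputable def stdGaussianCDF (x : ℝ) : ℝ :=
  (Real.sqrt (2 * Real.pi))⁻¹ * ∫ t in Set.Iic x, Real.exp (-t ^ 2 / 2)

open intervalIntegral Set

lemma integrable_exp_neg_sq_div_two : Integrable fun t : ℝ ↦ exp (-t ^ 2 / 2) := by
  convert integrable_exp_neg_mul_sq (b := 1 / 2) (by norm_num) using 3
  ring

lemma stdGaussianCDF_sub (c b : ℝ) :
    stdGaussianCDF b - stdGaussianCDF c = (√(2 * π))⁻¹ * ∫ t in c..b, exp (-t ^ 2 / 2) := by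
  rw [stdGaussianCDF, stdGaussianCDF, ← mul_sub, integral_Iic_sub_Iic
    integrable_exp_neg_sq_div_two.integrableOn integrable_exp_neg_sq_div_two.integrableOn]

lemma integral_exp_const_sub_mul (C m c b : ℝ) (hm : m ≠ 0) :
    ∫ t in c..b, exp (C - m * t) = (exp (C - m * c) - exp (C - m * b)) / m := by
  rw [integral_comp_sub_mul exp hm, integral_exp, smul_eq_mul, inv_mul_eq_div]

/-- `∫_c^b exp (m²/2 - m t) dt` for the midpoint `m = (c + b)/2`. -/
noncomputable def midpointTangentIntegral (c b : ℝ) : ℝ :=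
  2 * exp (-((3 * c - b) * (b + c)) / 8) * (1 - exp (-(b ^ 2 - c ^ 2) / 2)) / (c + b)

lemma integral_exp_midpointTangent {c b : ℝ} (hcb : 0 < c + b) :
    ∫ t in c..b, exp ((c + b) ^ 2 / 8 - (c + b) / 2 * t) = midpointTangentIntegral c b := by
  rw [integral_exp_const_sub_mul _ _ _ _ (by positivity), midpointTangentIntegral,
    show (c + b) ^ 2 / 8 - (c + b) / 2 * b
      = -((3 * c - b) * (b + c)) / 8 + -(b ^ 2 - c ^ 2) / 2 by ring, exp_add]
  field_simp
  ring_nf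

lemma exp_neg_sq_div_two_eq_tangent_mul (c b t : ℝ) :
    exp (-t ^ 2 / 2)
      = exp ((c + b) ^ 2 / 8 - (c + b) / 2 * t) * exp (-(t - (c + b) / 2) ^ 2 / 2) := by
  rw [← exp_add]; ring_nf

lemma integral_exp_neg_sq_div_two_le_midpointTangentIntegral {c b : ℝ} (hcb : c ≤ b)
    (hpos : 0 < c + b) : ∫ t in c..b, exp (-t ^ 2 / 2) ≤ midpointTangentIntegral c b := by
  rw [← integral_exp_midpointTangent hpos]
  refine integral_mono_on hcb (Continuous.intervalIntegrable (by fun_prop) _ _)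
    (Continuous.intervalIntegrable (by fun_prop) _ _) fun t _ ↦ ?_
  rw [exp_neg_sq_div_two_eq_tangent_mul c b]
  exact mul_le_of_le_one_right (exp_nonneg _) (exp_le_one_iff.2 (by nlinarith))

lemma exp_mul_midpointTangentIntegral_le_integral {c b : ℝ} (hcb : c ≤ b) (hpos : 0 < c + b) :
    exp (-(b - c) ^ 2 / 8) * midpointTangentIntegral c b ≤ ∫ t in c..b, exp (-t ^ 2 / 2) := by
  rw [← integral_exp_midpointTangent hpos, ← intervalIntegral.integral_const_mul]
  refine integral_mono_on hcb (Continuous.intervalIntegrable (by fun_prop) _ _)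
    (Continuous.intervalIntegrable (by fun_prop) _ _) fun t ht ↦ ?_
  rw [exp_neg_sq_div_two_eq_tangent_mul c b, mul_comm]
  refine mul_le_mul_of_nonneg_left (exp_le_exp.2 ?_) (exp_nonneg _)
  nlinarith [ht.1, ht.2]

lemma integral_exp_neg_sq_div_two_le_mul {c b : ℝ} (hc : 0 ≤ c) (hcb : c ≤ b) :
    ∫ t in c..b, exp (-t ^ 2 / 2) ≤ (b - c) * exp (-c ^ 2 / 2) := by
  calc ∫ t in c..b, exp (-t ^ 2 / 2) ≤ ∫ _ in c..b, exp (-c ^ 2 / 2) :=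
        integral_mono_on hcb (Continuous.intervalIntegrable (by fun_prop) _ _)
          intervalIntegrable_const fun t ht ↦ exp_le_exp.2 (by nlinarith [ht.1])
    _ = (b - c) * exp (-c ^ 2 / 2) := by rw [intervalIntegral.integral_const, smul_eq_mul]

lemma mul_exp_neg_sq_div_two_le (y : ℝ) : y * exp (-y ^ 2 / 2) ≤ exp (-1 / 2) := by
  rcases le_or_gt y 0 with hy | hy
  · exact (mul_nonpos_of_nonpos_of_nonneg hy (exp_nonneg _)).trans (exp_nonneg _)
  have hsq : y ^ 2 ≤ exp (y ^ 2 - 1) := by linarith [add_one_le_exp (y ^ 2 - 1)]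
  have hy' : y ≤ exp ((y ^ 2 - 1) / 2) := by
    rw [exp_half]; exact le_sqrt_of_sq_le hsq
  calc y * exp (-y ^ 2 / 2) ≤ exp ((y ^ 2 - 1) / 2) * exp (-y ^ 2 / 2) :=
        mul_le_mul_of_nonneg_right hy' (exp_nonneg _)
    _ = exp (-1 / 2) := by rw [← exp_add]; ring_nf

noncomputable def gaussianWindow (j a : ℝ) : ℝ :=
  ∫ t in a * √j..a * √(j + 1), exp (-t ^ 2 / 2)

lemma sqrt_add_one_eq_sqrt_mul_exp {j : ℝ} (hj : 0 < j) :
    √(j + 1) = √j * exp (log ((j + 1) / j) / 2) := by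
  rw [exp_half, exp_log (by positivity), ← sqrt_mul hj.le, mul_div_cancel₀ _ hj.ne']

lemma hasDerivAt_gaussianWindow {j : ℝ} (hj : 0 < j) (a : ℝ) :
    HasDerivAt (gaussianWindow j)
      (√j * (exp ((log ((j + 1) / j) - (j + 1) * a ^ 2) / 2) - exp (-(j * a ^ 2) / 2))) a := by
  have hF (u : ℝ) :
      HasDerivAt (fun u ↦ ∫ t in (0 : ℝ)..u, exp (-t ^ 2 / 2)) (exp (-u ^ 2 / 2)) u :=
    (Continuous.integral_hasStrictDerivAt (by fun_prop) 0 u).hasDerivAt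
  have hwin : gaussianWindow j = fun a ↦ (∫ t in (0 : ℝ)..a * √(j + 1), exp (-t ^ 2 / 2))
      - ∫ t in (0 : ℝ)..a * √j, exp (-t ^ 2 / 2) := by
    funext a
    exact (integral_interval_sub_left (Continuous.intervalIntegrable (by fun_prop) _ _)
      (Continuous.intervalIntegrable (by fun_prop) _ _)).symm
  rw [hwin]
  refine (((hF _).comp a ((hasDerivAt_id a).mul_const √(j + 1))).sub
    ((hF _).comp a ((hasDerivAt_id a).mul_const √j))).congr_deriv ?_
  simp only [id, one_mul, mul_pow, sq_sqrt hj.le, sq_sqrt (by linarith : 0 ≤ j + 1)]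
  rw [sqrt_add_one_eq_sqrt_mul_exp hj, mul_left_comm, ← exp_add]
  ring_nf

lemma gaussianWindow_le_gaussianWindow_sqrt_log {j a : ℝ} (hj : 0 < j) (ha : 0 ≤ a) :
    gaussianWindow j a ≤ gaussianWindow j √(log ((j + 1) / j)) := by
  set ℓ := log ((j + 1) / j)
  have hℓ : 0 ≤ ℓ := log_nonneg (by rw [le_div_iff₀ hj]; linarith)
  have hderiv := hasDerivAt_gaussianWindow hj
  have hcont : Continuous (gaussianWindow j) := continuous_iff_continuousAt.2 fun a ↦
    (hderiv a).continuousAt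
  rcases le_total a √ℓ with hle | hge
  · refine monotoneOn_of_hasDerivWithinAt_nonneg (convex_Icc 0 √ℓ) hcont.continuousOn
      (fun x _ ↦ (hderiv x).hasDerivWithinAt) (fun x hx ↦ ?_) ⟨ha, hle⟩
      ⟨sqrt_nonneg ℓ, le_rfl⟩ hle
    rw [interior_Icc] at hx
    have : x ^ 2 ≤ ℓ := by
      calc x ^ 2 ≤ √ℓ ^ 2 := pow_le_pow_left₀ hx.1.le hx.2.le 2
        _ = ℓ := sq_sqrt hℓ
    exact mul_nonneg (sqrt_nonneg j) (sub_nonneg.2 (exp_le_exp.2 (by linarith)))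
  · refine antitoneOn_of_hasDerivWithinAt_nonpos (convex_Ici √ℓ) hcont.continuousOn
      (fun x _ ↦ (hderiv x).hasDerivWithinAt) (fun x hx ↦ ?_) self_mem_Ici hge hge
    rw [interior_Ici] at hx
    have : ℓ ≤ x ^ 2 := by
      calc ℓ = √ℓ ^ 2 := (sq_sqrt hℓ).symm
        _ ≤ x ^ 2 := pow_le_pow_left₀ (sqrt_nonneg ℓ) hx.le 2
    exact mul_nonpos_of_nonneg_of_nonpos (sqrt_nonneg j) (sub_nonpos.2 (exp_le_exp.2 (by linarith)))

lemma gaussianWindow_sqrt {j : ℝ} (hj : 0 ≤ j) (ℓ : ℝ) :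
    gaussianWindow j √ℓ = ∫ t in √(j * ℓ)..√((j + 1) * ℓ), exp (-t ^ 2 / 2) := by
  rw [gaussianWindow, mul_comm √ℓ, mul_comm √ℓ, ← sqrt_mul hj, ← sqrt_mul (by linarith)]

lemma exp_neg_half_log {y : ℝ} (hy : 0 < y) : exp (-log y / 2) = √y⁻¹ := by
  rw [exp_half, exp_neg, exp_log hy]

lemma log_three_halves_mem : log (3 / 2) ∈ Icc 0.40546 0.405466 := by
  constructor
  · rw [le_log_iff_exp_le (by norm_num)]
    refine (exp_bound' (by norm_num) (by norm_num) (n := 7) (by norm_num)).trans ?_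
    norm_num [Finset.sum_range_succ, Nat.factorial]
  · rw [log_le_iff_le_exp (by norm_num)]
    refine le_trans ?_ (sum_le_exp_of_nonneg (by norm_num) 7)
    norm_num [Finset.sum_range_succ, Nat.factorial]

lemma sqrt_mul_log_three_halves_mem :
    √(2 * log (3 / 2)) ∈ Icc 0.90051 0.90052 ∧ √(3 * log (3 / 2)) ∈ Icc 1.10289 1.10291
      ∧ (3 * √(2 * log (3 / 2)) - √(3 * log (3 / 2)))
          * (√(3 * log (3 / 2)) + √(2 * log (3 / 2))) / 8 ∈ Icc 0.40033 0.40036 := by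
  obtain ⟨hℓlo, hℓhi⟩ := log_three_halves_mem
  set c := √(2 * log (3 / 2))
  set b := √(3 * log (3 / 2))
  have hc2 : c ^ 2 = 2 * log (3 / 2) := sq_sqrt (by linarith)
  have hb2 : b ^ 2 = 3 * log (3 / 2) := sq_sqrt (by linarith)
  have hc : c ∈ Icc 0.90051 0.90052 :=
    ⟨(le_sqrt (by norm_num) (by linarith)).2 (by linarith),
      (sqrt_le_left (by norm_num)).2 (by linarith)⟩
  have hb : b ∈ Icc 1.10289 1.10291 :=
    ⟨(le_sqrt (by norm_num) (by linarith)).2 (by linarith),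
      (sqrt_le_left (by norm_num)).2 (by linarith)⟩
  refine ⟨hc, hb, ?_, ?_⟩
  · nlinarith [mul_le_mul hc.1 hb.1 (by norm_num) (by linarith [hc.1])]
  · nlinarith [mul_le_mul hc.2 hb.2 (by linarith [hb.1]) (by norm_num)]

lemma exp_neg_sq_sub_sq_sqrt_mul_log_three_halves :
    exp (-(√(3 * log (3 / 2)) ^ 2 - √(2 * log (3 / 2)) ^ 2) / 2) = √(2 / 3) := by
  have hℓ : 0 ≤ log (3 / 2) := log_nonneg (by norm_num)
  rw [sq_sqrt (by linarith), sq_sqrt (by linarith),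
    show -(3 * log (3 / 2) - 2 * log (3 / 2)) / 2 = -log (3 / 2) / 2 by ring,
    exp_neg_half_log (by norm_num)]
  norm_num

lemma le_integral_exp_neg_sq_div_two_sqrt_log_three_halves :
    0.12 ≤ ∫ t in √(2 * log (3 / 2))..√(3 * log (3 / 2)), exp (-t ^ 2 / 2) := by
  obtain ⟨hc, hb, hX⟩ := sqrt_mul_log_three_halves_mem
  have hsqrt := exp_neg_sq_sub_sq_sqrt_mul_log_three_halves
  set c := √(2 * log (3 / 2))
  set b := √(3 * log (3 / 2))
  have hsqrt_le : √(2 / 3) ≤ 0.8165 := (sqrt_le_left (by norm_num)).2 (by norm_num)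
  have hexpX : 0.669 ≤ exp (-((3 * c - b) * (b + c)) / 8) := by
    calc (0.669 : ℝ) ≤ exp (-0.40036) := by
          rw [exp_neg, le_inv_comm₀ (by norm_num) (exp_pos _)]
          refine (exp_bound' (by norm_num) (by norm_num) (n := 4) (by norm_num)).trans ?_
          norm_num [Finset.sum_range_succ, Nat.factorial]
      _ ≤ _ := exp_le_exp.2 (by linarith [hX.2])
  have hexpε : 0.9948 ≤ exp (-(b - c) ^ 2 / 8) := by
    have : (b - c) ^ 2 ≤ (1.10291 - 0.90051) ^ 2 :=
      pow_le_pow_left₀ (by linarith [hc.2, hb.1]) (by linarith [hc.1, hb.2]) 2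
    linarith [add_one_le_exp (-(b - c) ^ 2 / 8)]
  refine le_trans ?_ (exp_mul_midpointTangentIntegral_le_integral (by linarith [hc.2, hb.1])
    (by linarith [hc.1, hb.1]))
  rw [midpointTangentIntegral, hsqrt]
  have : 0 ≤ 1 - √(2 / 3) := by linarith
  calc (0.12 : ℝ) ≤ 0.9948 * (2 * 0.669 * (1 - 0.8165) / (0.90052 + 1.10291)) := by norm_num
    _ ≤ _ := by gcongr; exacts [hc.2, hb.2]

lemma integral_exp_neg_sq_div_two_sqrt_log_three_halves_le :
    ∫ t in √(2 * log (3 / 2))..√(3 * log (3 / 2)), exp (-t ^ 2 / 2) ≤ 0.1228 := by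
  obtain ⟨hc, hb, hX⟩ := sqrt_mul_log_three_halves_mem
  have hsqrt := exp_neg_sq_sub_sq_sqrt_mul_log_three_halves
  set c := √(2 * log (3 / 2))
  set b := √(3 * log (3 / 2))
  have hsqrt_ge : 0.816496 ≤ √(2 / 3) := (le_sqrt (by norm_num) (by norm_num)).2 (by norm_num)
  have hsqrt_le : √(2 / 3) ≤ 1 := sqrt_le_one.2 (by norm_num)
  have hexpX : exp (-((3 * c - b) * (b + c)) / 8) ≤ 0.67011 := by
    calc exp (-((3 * c - b) * (b + c)) / 8) ≤ exp (-0.40033) :=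
          exp_le_exp.2 (by linarith [hX.1])
      _ ≤ 0.67011 := by
          rw [exp_neg, inv_le_comm₀ (exp_pos _) (by norm_num)]
          refine le_trans ?_ (sum_le_exp_of_nonneg (by norm_num) 7)
          norm_num [Finset.sum_range_succ, Nat.factorial]
  refine (integral_exp_neg_sq_div_two_le_midpointTangentIntegral (by linarith [hc.2, hb.1])
    (by linarith [hc.1, hb.1])).trans ?_
  rw [midpointTangentIntegral, hsqrt]
  calc 2 * exp (-((3 * c - b) * (b + c)) / 8) * (1 - √(2 / 3)) / (c + b)
      ≤ 2 * 0.67011 * (1 - 0.816496) / (0.90051 + 1.10289) := by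
        gcongr
        exacts [hc.1, hb.1]
    _ ≤ 0.1228 := by norm_num

lemma gaussianWindow_three_sqrt_log_le : gaussianWindow 3 √(log (4 / 3)) ≤ 0.09 := by
  have hℓlo : 0.2876 ≤ log (4 / 3) := by
    rw [le_log_iff_exp_le (by norm_num)]
    refine (exp_bound' (by norm_num) (by norm_num) (n := 5) (by norm_num)).trans ?_
    norm_num [Finset.sum_range_succ, Nat.factorial]
  rw [gaussianWindow_sqrt (by norm_num)]
  set ℓ := log (4 / 3)
  set c := √(3 * ℓ)
  set b := √((3 + 1) * ℓ)
  have hc2 : c ^ 2 = 3 * ℓ := sq_sqrt (by linarith)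
  have hb2 : b ^ 2 = (3 + 1) * ℓ := sq_sqrt (by linarith)
  have hc : 0.9288 ≤ c := (le_sqrt (by norm_num) (by linarith)).2 (by linarith)
  have hb : 1.0725 ≤ b := (le_sqrt (by norm_num) (by linarith)).2 (by linarith)
  have hcb : c ≤ b := sqrt_le_sqrt (by linarith)
  have hpos : 0 < c + b := by linarith
  have hX : 0.4287 ≤ (3 * c - b) * (b + c) / 8 := by
    nlinarith [mul_le_mul hc hb (by norm_num) (by linarith)]
  have hexpX : exp (-((3 * c - b) * (b + c)) / 8) ≤ 0.652 := by
    calc exp (-((3 * c - b) * (b + c)) / 8) ≤ exp (-0.4287) := exp_le_exp.2 (by linarith)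
      _ ≤ 0.652 := by
          rw [exp_neg, inv_le_comm₀ (exp_pos _) (by norm_num)]
          refine le_trans ?_ (sum_le_exp_of_nonneg (by norm_num) 5)
          norm_num [Finset.sum_range_succ, Nat.factorial]
  have hsqrt : exp (-(b ^ 2 - c ^ 2) / 2) = √(3 / 4) := by
    rw [hb2, hc2, show -((3 + 1) * ℓ - 3 * ℓ) / 2 = -ℓ / 2 by ring,
      exp_neg_half_log (by norm_num)]
    norm_num
  have hsqrt_ge : 0.866 ≤ √(3 / 4) := (le_sqrt (by norm_num) (by norm_num)).2 (by norm_num)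
  have hsqrt_le : √(3 / 4) ≤ 1 := sqrt_le_one.2 (by norm_num)
  refine (integral_exp_neg_sq_div_two_le_midpointTangentIntegral hcb hpos).trans ?_
  rw [midpointTangentIntegral, hsqrt]
  calc 2 * exp (-((3 * c - b) * (b + c)) / 8) * (1 - √(3 / 4)) / (c + b)
      ≤ 2 * 0.652 * (1 - 0.866) / (0.9288 + 1.0725) := by gcongr
    _ ≤ 0.09 := by norm_num

lemma succ_mul_gaussianWindow_le_of_four_le {j a : ℝ} (hj : 4 ≤ j) (ha : 0 ≤ a) :
    (j + 1) * gaussianWindow j a ≤ 0.36 := by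
  set y := a * √j
  have hj2 : √j ^ 2 = j := sq_sqrt (by linarith)
  have hj12 : √(j + 1) ^ 2 = j + 1 := sq_sqrt (by linarith)
  have hwin : gaussianWindow j a ≤ (a * √(j + 1) - y) * exp (-y ^ 2 / 2) :=
    integral_exp_neg_sq_div_two_le_mul (by positivity)
      (mul_le_mul_of_nonneg_left (sqrt_le_sqrt (by linarith)) ha)
  have hwidth : (a * √(j + 1) - y) * (√j * √(j + 1) + j) = y := by
    linear_combination (a * √j) * hj12 - (a * √(j + 1)) * hj2
  have hden : 2 * j + 0.47 ≤ √j * √(j + 1) + j := by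
    have : j + 0.47 ≤ √j * √(j + 1) := by
      rw [← sqrt_mul (by linarith), le_sqrt (by linarith) (by nlinarith)]
      nlinarith
    linarith
  have hexp : exp (-1 / 2) ≤ 0.6066 := by
    rw [neg_div, exp_neg, inv_le_comm₀ (exp_pos _) (by norm_num)]
    refine le_trans ?_ (sum_le_exp_of_nonneg (by norm_num) 6)
    norm_num [Finset.sum_range_succ, Nat.factorial]
  calc (j + 1) * gaussianWindow j a ≤ (j + 1) * ((a * √(j + 1) - y) * exp (-y ^ 2 / 2)) :=
        mul_le_mul_of_nonneg_left hwin (by linarith)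
    _ = (j + 1) * (y * exp (-y ^ 2 / 2)) / (√j * √(j + 1) + j) := by
        rw [eq_div_iff (by linarith)]
        linear_combination (j + 1) * exp (-y ^ 2 / 2) * hwidth
    _ ≤ (j + 1) * 0.6066 / (2 * j + 0.47) := by
        gcongr
        exact (mul_exp_neg_sq_div_two_le y).trans hexp
    _ ≤ 0.36 := by rw [div_le_iff₀ (by linarith)]; linarith

lemma succ_mul_gaussianWindow_le {j : ℕ} (hj : 2 ≤ j) {a : ℝ} (ha : 0 ≤ a) :
    ((j : ℝ) + 1) * gaussianWindow j a
      ≤ 3 * ∫ t in √(2 * log (3 / 2))..√(3 * log (3 / 2)), exp (-t ^ 2 / 2) := by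
  have hI := le_integral_exp_neg_sq_div_two_sqrt_log_three_halves
  obtain hj4 | hj4 := lt_or_ge j 4
  · interval_cases j
    · have hmax := gaussianWindow_le_gaussianWindow_sqrt_log (j := 2) (by norm_num) ha
      rw [gaussianWindow_sqrt (by norm_num), show ((2 : ℝ) + 1) / 2 = 3 / 2 by norm_num,
        show (2 : ℝ) + 1 = 3 by norm_num] at hmax
      push_cast
      linarith
    · have hmax := gaussianWindow_le_gaussianWindow_sqrt_log (j := 3) (by norm_num) ha
      rw [show ((3 : ℝ) + 1) / 3 = 4 / 3 by norm_num] at hmax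
      push_cast
      linarith [gaussianWindow_three_sqrt_log_le, hI]
  · linarith [succ_mul_gaussianWindow_le_of_four_le (j := j) (by exact_mod_cast hj4) ha, hI]

theorem stmt7 (j : ℕ) (hj : 2 ≤ j) (a : ℝ) (ha : 0 ≤ a) :
    ((j : ℝ) + 1) * (stdGaussianCDF (a * Real.sqrt ((j : ℝ) + 1)) - stdGaussianCDF (a * Real.sqrt j))
        ≤ 3 / Real.sqrt (2 * Real.pi)
          * ∫ t in Real.sqrt (2 * Real.log (3 / 2))..Real.sqrt (3 * Real.log (3 / 2)),
              Real.exp (-t ^ 2 / 2)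
      ∧ 3 / Real.sqrt (2 * Real.pi)
          * (∫ t in Real.sqrt (2 * Real.log (3 / 2))..Real.sqrt (3 * Real.log (3 / 2)),
              Real.exp (-t ^ 2 / 2)) ≤ 0.147 := by
  constructor
  · rw [stdGaussianCDF_sub, mul_left_comm, div_eq_inv_mul, mul_assoc]
    exact mul_le_mul_of_nonneg_left (succ_mul_gaussianWindow_le hj ha) (by positivity)
  · have hsqrt : 2.5066 ≤ √(2 * π) :=
      (le_sqrt (by norm_num) (by positivity)).2 (by nlinarith [pi_gt_d6])
    have hI := integral_exp_neg_sq_div_two_sqrt_log_three_halves_le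
    calc 3 / √(2 * π) * ∫ t in √(2 * log (3 / 2))..√(3 * log (3 / 2)), exp (-t ^ 2 / 2)
        ≤ 3 / 2.5066 * 0.1228 := by
          gcongr
          linarith [le_integral_exp_neg_sq_div_two_sqrt_log_three_halves]
      _ ≤ 0.147 := by norm_num
end

section
/- Let a ≥ 0 and set q₁ = Φ(a), q₂ = Φ(a√2), q₃ = Φ(a√3). Then q₁ + 3q₂ − 3q₃ ≥ 1/2, with the minimum over a ≥ 0 attained at the boundary a = 0. -/
open MeasureTheory ProbabilityTheory Real

lemma gauss_integrable : Integrable (fun t : ℝ => Real.exp (-t ^ 2 / 2)) := by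
  have := integrable_exp_neg_mul_sq (b := (1:ℝ)/2) (by norm_num)
  convert this using 2 with t
  ring_nf

lemma gauss_intable (x : ℝ) : IntegrableOn (fun t : ℝ => Real.exp (-t ^ 2 / 2)) (Set.Iic x) :=
  gauss_integrable.integrableOn

lemma cdf_sub (c b : ℝ) :
    stdGaussianCDF b - stdGaussianCDF c
      = (Real.sqrt (2 * Real.pi))⁻¹ * ∫ t in c..b, Real.exp (-t ^ 2 / 2) := by
  rw [stdGaussianCDF, stdGaussianCDF, ← mul_sub,
    intervalIntegral.integral_Iic_sub_Iic (gauss_intable c) (gauss_intable b)]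

lemma total_integral : (∫ t : ℝ, Real.exp (-t ^ 2 / 2)) = Real.sqrt (2 * Real.pi) := by
  have := integral_gaussian ((1:ℝ)/2)
  have h2 : (∫ t : ℝ, Real.exp (-t ^ 2 / 2)) = ∫ t : ℝ, Real.exp (-(1/2) * t ^ 2) := by
    congr 1; funext t; ring_nf
  rw [h2, this]
  rw [div_div_eq_mul_div, div_one, mul_comm]

lemma cdf_zero : stdGaussianCDF 0 = 1 / 2 := by
  have hsym : (∫ t in Set.Iic (0:ℝ), Real.exp (-t ^ 2 / 2))
      = ∫ t in Set.Ioi (0:ℝ), Real.exp (-t ^ 2 / 2) := by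
    have := integral_comp_neg_Iic (0:ℝ) (fun t => Real.exp (-t ^ 2 / 2))
    simp only [neg_zero] at this
    rw [← this]
    congr 1; funext t; ring_nf
  have hadd := intervalIntegral.integral_Iic_add_Ioi (b := (0:ℝ))
    (f := fun t => Real.exp (-t ^ 2 / 2)) gauss_integrable.integrableOn
    gauss_integrable.integrableOn
  rw [total_integral, ← hsym] at hadd
  have hI : (∫ t in Set.Iic (0:ℝ), Real.exp (-t ^ 2 / 2)) = Real.sqrt (2 * Real.pi) / 2 := by
    linarith
  rw [stdGaussianCDF, hI]
  have hpos : 0 < Real.sqrt (2 * Real.pi) := Real.sqrt_pos.mpr (by positivity)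
  field_simp

theorem stmt11 :
    (∀ a : ℝ, 0 ≤ a →
      1 / 2 ≤ stdGaussianCDF a + 3 * stdGaussianCDF (a * Real.sqrt 2)
        - 3 * stdGaussianCDF (a * Real.sqrt 3))
      ∧ stdGaussianCDF 0 + 3 * stdGaussianCDF (0 * Real.sqrt 2)
          - 3 * stdGaussianCDF (0 * Real.sqrt 3) = 1 / 2 := by
  constructor
  · intro a ha
    set g : ℝ → ℝ := fun t => Real.exp (-t ^ 2 / 2) with hg
    have hcont : Continuous g := by continuity
    have hs2 : Real.sqrt 2 ^ 2 = 2 := Real.sq_sqrt (by norm_num)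
    have hs3 : Real.sqrt 3 ^ 2 = 3 := Real.sq_sqrt (by norm_num)
    have hs2nn : (0:ℝ) ≤ Real.sqrt 2 := Real.sqrt_nonneg 2
    have hs3nn : (0:ℝ) ≤ Real.sqrt 3 := Real.sqrt_nonneg 3
    have hle23 : a * Real.sqrt 2 ≤ a * Real.sqrt 3 := by
      apply mul_le_mul_of_nonneg_left _ ha
      exact Real.sqrt_le_sqrt (by norm_num)
    -- lower bound for ∫_0^a g
    have h1 : a * Real.exp (-a ^ 2 / 2) ≤ ∫ t in (0:ℝ)..a, g t := by
      have := intervalIntegral.integral_mono_on (μ := volume) (a := 0) (b := a) ha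
        (f := fun _ => Real.exp (-a ^ 2 / 2)) (g := g)
        (intervalIntegrable_const) (hcont.intervalIntegrable 0 a) ?_
      · simpa using this
      · intro t ht
        simp only [hg]
        apply Real.exp_le_exp.mpr
        have h1 : 0 ≤ t := ht.1
        have h2 : t ≤ a := ht.2
        nlinarith
    -- upper bound for ∫_{a√2}^{a√3} g
    have h2 : (∫ t in (a * Real.sqrt 2)..(a * Real.sqrt 3), g t)
        ≤ (a * Real.sqrt 3 - a * Real.sqrt 2) * Real.exp (-a ^ 2) := by
      have := intervalIntegral.integral_mono_on (μ := volume) hle23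
        (f := g) (g := fun _ => Real.exp (-a ^ 2))
        (hcont.intervalIntegrable _ _) (intervalIntegrable_const) ?_
      · simpa using this
      · intro t ht
        simp only [hg]
        apply Real.exp_le_exp.mpr
        have h1 : a * Real.sqrt 2 ≤ t := ht.1
        have ht0 : 0 ≤ t := le_trans (by positivity) h1
        have hmm := mul_le_mul h1 h1 (by positivity) ht0
        nlinarith [hs2]
    -- key inequality
    have key : 0 ≤ (∫ t in (0:ℝ)..a, g t)
        - 3 * ∫ t in (a * Real.sqrt 2)..(a * Real.sqrt 3), g t := by
      have hexp : 3 * (Real.sqrt 3 - Real.sqrt 2) * Real.exp (-a ^ 2)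
          ≤ Real.exp (-a ^ 2 / 2) := by
        rw [show (-a^2 / 2 : ℝ) = -a^2 + a^2/2 by ring, Real.exp_add]
        have h1 : (1:ℝ) ≤ Real.exp (a ^ 2 / 2) := by
          rw [show (1:ℝ) = Real.exp 0 by simp]
          exact Real.exp_le_exp.mpr (by positivity)
        have hx : (4:ℝ)/3 ≤ Real.sqrt 2 := by
          rw [show (4:ℝ)/3 = Real.sqrt ((4/3)^2) by rw [Real.sqrt_sq (by norm_num)]]
          exact Real.sqrt_le_sqrt (by norm_num)
        have h2 : 3 * (Real.sqrt 3 - Real.sqrt 2) ≤ 1 := by nlinarith [hs2, hs3, hx, hs3nn]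
        have h3 : (0:ℝ) < Real.exp (-a ^ 2) := Real.exp_pos _
        nlinarith
      nlinarith [Real.exp_pos (-a^2), Real.exp_pos (-a^2/2)]
    -- assemble
    have e1 : stdGaussianCDF a - stdGaussianCDF 0
        = (Real.sqrt (2 * Real.pi))⁻¹ * ∫ t in (0:ℝ)..a, g t := cdf_sub 0 a
    have e2 : stdGaussianCDF (a * Real.sqrt 3) - stdGaussianCDF (a * Real.sqrt 2)
        = (Real.sqrt (2 * Real.pi))⁻¹ * ∫ t in (a * Real.sqrt 2)..(a * Real.sqrt 3), g t :=
      cdf_sub _ _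
    have hpos : (0:ℝ) < (Real.sqrt (2 * Real.pi))⁻¹ := by positivity
    have hm := mul_nonneg hpos.le key
    rw [cdf_zero] at e1
    nlinarith [hm, e1, e2]
  · rw [zero_mul, zero_mul, cdf_zero]; ring
end
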